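/- In the monoid SKω, the circle element c = δ_k γ_k (which is independent of k) is central: for every element t of SKω, t·c = c·t. -/

import Mathlib

/-- Generators of the monoid `SKω`: cups `δ_k`, caps `γ_k` and crossings `σ_k`,
indexed by positive natural numbers. -/
inductive SKGen : Type
  | cup : ℕ+ → SKGen
  | cap : ℕ+ → SKGen
  | cross : ℕ+ → SKGen

open FreeMonoid in
/-- The defining relations of the monoid `SKω`. -/
inductive SKRel : FreeMonoid SKGen → FreeMonoid SKGen → Prop
  | cup (j k : ℕ+) (h : j ≤ k) :
      SKRel (of (.cup k) * of (.cup j)) (of (.cup j) * of (.cup (k + 2)))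
  | cap (j k : ℕ+) (h : j ≤ k) :
      SKRel (of (.cap j) * of (.cap k)) (of (.cap (k + 2)) * of (.cap j))
  | cup_cap_one (j k : ℕ+) (h : j ≤ k) :
      SKRel (of (.cup (k + 2)) * of (.cap j)) (of (.cap j) * of (.cup k))
  | cap_cup_one (j k : ℕ+) (h : j ≤ k) :
      SKRel (of (.cup j) * of (.cap (k + 2))) (of (.cap k) * of (.cup j))
  | cup_cap (i : ℕ+) :
      SKRel (of (.cup i) * of (.cap (i + 1))) 1
  | sigma (j k : ℕ+) (h : j ≤ k) :
      SKRel (of (.cross (k + 2)) * of (.cross j)) (of (.cross j) * of (.cross (k + 2)))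
  | sigma_two (i : ℕ+) :
      SKRel (of (.cross i) * of (.cross i)) 1
  | sigma_three (i : ℕ+) :
      SKRel (of (.cross (i + 1)) * of (.cross i) * of (.cross (i + 1)))
            (of (.cross i) * of (.cross (i + 1)) * of (.cross i))
  | sigma_cup_one (j k : ℕ+) (h : j ≤ k) :
      SKRel (of (.cup (k + 2)) * of (.cross j)) (of (.cross j) * of (.cup (k + 2)))
  | sigma_cup_two (j k : ℕ+) (h : j ≤ k) :
      SKRel (of (.cup j) * of (.cross (k + 2))) (of (.cross k) * of (.cup j))
  | sigma_cup_three (i : ℕ+) :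
      SKRel (of (.cup i) * of (.cross i)) (of (.cup i))
  | sigma_cup_four (i : ℕ+) :
      SKRel (of (.cup (i + 1)) * of (.cross i)) (of (.cup i) * of (.cross (i + 1)))
  | sigma_cap_one (j k : ℕ+) (h : j ≤ k) :
      SKRel (of (.cross j) * of (.cap (k + 2))) (of (.cap (k + 2)) * of (.cross j))
  | sigma_cap_two (j k : ℕ+) (h : j ≤ k) :
      SKRel (of (.cross (k + 2)) * of (.cap j)) (of (.cap j) * of (.cross k))
  | sigma_cap_three (i : ℕ+) :
      SKRel (of (.cross i) * of (.cap i)) (of (.cap i))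
  | sigma_cap_four (i : ℕ+) :
      SKRel (of (.cross i) * of (.cap (i + 1))) (of (.cross (i + 1)) * of (.cap i))

/-- The monoid `SKω`, presented by cups, caps and crossings with the monoid, cup-cap,
σ, σ-cup and σ-cap equations. -/
def SKomega : Type := PresentedMonoid SKRel

instance : Monoid SKomega := by unfold SKomega; infer_instance

/-- The cup generator `δ_k` of `SKω`. -/
def SKomega.cup (k : ℕ+) : SKomega := PresentedMonoid.of SKRel (SKGen.cup k)

/-- The cap generator `γ_k` of `SKω`. -/
def SKomega.cap (k : ℕ+) : SKomega := PresentedMonoid.of SKRel (SKGen.cap k)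

/-- The crossing generator `σ_k` of `SKω`. -/
def SKomega.cross (k : ℕ+) : SKomega := PresentedMonoid.of SKRel (SKGen.cross k)


/-- The circle element `c = δ_1 γ_1` of `SKω`. -/
def SKomega.circle : SKomega := SKomega.cup 1 * SKomega.cap 1

/-!
Inserting `σ_k σ_k = 1` between `δ_{k+1}` and `γ_{k+1}` and sliding the two crossings outwards
shows `δ_{k+1} γ_{k+1} = δ_k γ_k`, so `c = δ_k γ_k` for every `k`. To move a generator of index
`j` across `c`, write `c` as `δ_{j+2} γ_{j+2}` on one side (and as `δ_j γ_j` where convenient);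
the relations between generators of indices `j` and `j + 2` then do the job. Since the generators
generate `SKω`, `c` is central.
-/

namespace PresentedMonoid

variable {α : Type*} {rels : FreeMonoid α → FreeMonoid α → Prop}

theorem of_mul_of_eq_of_mul_of_of_rel {a b c d : α}
    (h : rels (.of a * .of b) (.of c * .of d)) :
    of rels a * of rels b = of rels c * of rels d := by
  simpa only [of, map_mul] using mk_eq_mk_of_rel h

theorem of_mul_of_eq_one_of_rel {a b : α} (h : rels (.of a * .of b) 1) :
    of rels a * of rels b = 1 := by
  simpa only [of, map_mul, map_one] using mk_eq_mk_of_rel h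

theorem commute_of_forall_commute_of {x : PresentedMonoid rels}
    (h : ∀ a, Commute (of rels a) x) (t : PresentedMonoid rels) : Commute t x := by
  have ht : t ∈ Submonoid.closure (Set.range (of rels)) :=
    closure_range_of rels ▸ Submonoid.mem_top t
  induction ht using Submonoid.closure_induction with
  | mem _ ha => obtain ⟨a, rfl⟩ := ha; exact h a
  | one => exact Commute.one_left x
  | mul _ _ _ _ hy hz => exact hy.mul_left hz

end PresentedMonoid

namespace SKomega

open PresentedMonoid

theorem cross_mul_self (i : ℕ+) : cross i * cross i = 1 :=
  of_mul_of_eq_one_of_rel (SKRel.sigma_two i)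

theorem cup_mul_cup {j k : ℕ+} (h : j ≤ k) : cup k * cup j = cup j * cup (k + 2) :=
  of_mul_of_eq_of_mul_of_of_rel (SKRel.cup j k h)

theorem cap_mul_cap {j k : ℕ+} (h : j ≤ k) : cap j * cap k = cap (k + 2) * cap j :=
  of_mul_of_eq_of_mul_of_of_rel (SKRel.cap j k h)

theorem cup_mul_cap_add_two {j k : ℕ+} (h : j ≤ k) : cup j * cap (k + 2) = cap k * cup j :=
  of_mul_of_eq_of_mul_of_of_rel (SKRel.cap_cup_one j k h)

theorem cup_add_two_mul_cross {j k : ℕ+} (h : j ≤ k) :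
    cup (k + 2) * cross j = cross j * cup (k + 2) :=
  of_mul_of_eq_of_mul_of_of_rel (SKRel.sigma_cup_one j k h)

theorem cross_mul_cap_add_two {j k : ℕ+} (h : j ≤ k) :
    cross j * cap (k + 2) = cap (k + 2) * cross j :=
  of_mul_of_eq_of_mul_of_of_rel (SKRel.sigma_cap_one j k h)

theorem cup_add_one_mul_cross (i : ℕ+) : cup (i + 1) * cross i = cup i * cross (i + 1) :=
  of_mul_of_eq_of_mul_of_of_rel (SKRel.sigma_cup_four i)

theorem cross_mul_cap_add_one (i : ℕ+) : cross i * cap (i + 1) = cross (i + 1) * cap i :=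
  of_mul_of_eq_of_mul_of_of_rel (SKRel.sigma_cap_four i)

theorem cup_add_one_mul_cap_add_one (i : ℕ+) : cup (i + 1) * cap (i + 1) = cup i * cap i :=
  calc cup (i + 1) * cap (i + 1) = cup (i + 1) * cross i * (cross i * cap (i + 1)) := by
        rw [mul_assoc, ← mul_assoc (cross i), cross_mul_self, one_mul]
    _ = cup i * cross (i + 1) * (cross (i + 1) * cap i) := by
        rw [cup_add_one_mul_cross, cross_mul_cap_add_one]
    _ = cup i * cap i := by
        rw [mul_assoc, ← mul_assoc (cross (i + 1)), cross_mul_self, one_mul]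

theorem cup_mul_cap (k : ℕ+) : cup k * cap k = circle := by
  induction k using PNat.recOn with
  | one => rfl
  | succ k ih => rw [cup_add_one_mul_cap_add_one, ih]

theorem commute_cup_circle (j : ℕ+) : Commute (cup j) circle :=
  calc cup j * circle = cup j * cup (j + 2) * cap (j + 2) := by rw [mul_assoc, cup_mul_cap]
    _ = cup j * (cap j * cup j) := by
        rw [← cup_mul_cup le_rfl, mul_assoc, cup_mul_cap_add_two le_rfl]
    _ = circle * cup j := by rw [← mul_assoc, cup_mul_cap]

theorem commute_cap_circle (j : ℕ+) : Commute (cap j) circle :=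
  calc cap j * circle = cap j * cup j * cap j := by rw [mul_assoc, cup_mul_cap]
    _ = cup j * (cap (j + 2) * cap j) := by
        rw [← cup_mul_cap_add_two le_rfl, mul_assoc]
    _ = circle * cap j := by rw [← cap_mul_cap le_rfl, ← mul_assoc, cup_mul_cap]

theorem commute_cross_circle (j : ℕ+) : Commute (cross j) circle :=
  calc cross j * circle = cross j * cup (j + 2) * cap (j + 2) := by rw [mul_assoc, cup_mul_cap]
    _ = cup (j + 2) * (cap (j + 2) * cross j) := by
        rw [← cup_add_two_mul_cross le_rfl, mul_assoc, cross_mul_cap_add_two le_rfl]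
    _ = circle * cross j := by rw [← mul_assoc, cup_mul_cap]

end SKomega

theorem skomega_circle_central (t : SKomega) :
    t * SKomega.circle = SKomega.circle * t := by
  refine (PresentedMonoid.commute_of_forall_commute_of ?_ t).eq
  rintro (k | k | k)
  exacts [SKomega.commute_cup_circle k, SKomega.commute_cap_circle k,
    SKomega.commute_cross_circle k]
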